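/- arXiv:2403.00943 — 4 statements merged into one kernel-verified Lean document; each statement's English description precedes it below -/
import Mathlib

section
/- For every integer c ≥ 2, every {−1, 0, c}-submodular valuation on a finite set of items is order neutral. -/
/-! Any two enumerations of a set differ by adjacent transpositions, so it suffices to compare
adding two items `x, y` on top of a set `T` in either order. Their gains `a, b` on `T` and
`a', b'` on the enlarged set satisfy `a + b' = b + a'` (both sides are the gain of `{x, y}`) and,
by submodularity, `a' ≤ a` and `b' ≤ b`. Hence the drops `a - a'` and `b - b'` coincide; a drop
within `{-1, 0, c}` is `0`, `1`, `c` or `c + 1`, and for `c ≥ 2` a nonzero drop determines its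
endpoints. So either `(a', b') = (a, b)` or `a = b` and `a' = b'`, and in both cases the
multisets `{a, b'}` and `{a', b}` agree. -/

/-- The multiset of marginal gains of a valuation `v` along a list of items,
where items later in the list are added first (the head of the list is added last). -/
def marginalGains {O : Type*} [DecidableEq O] (v : Finset O → ℤ) : List O → Multiset ℤ
  | [] => 0
  | o :: l => (v (insert o l.toFinset) - v l.toFinset) ::ₘ marginalGains v l

theorem marginalGains_eq_of_perm {O : Type*} [DecidableEq O] (v : Finset O → ℤ)
    (hswap : ∀ (x y : O) (l : List O), (y :: x :: l).Nodup →
      marginalGains v (y :: x :: l) = marginalGains v (x :: y :: l))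
    {l₁ l₂ : List O} (h : l₁.Perm l₂) (hn : l₁.Nodup) :
    marginalGains v l₁ = marginalGains v l₂ := by
  induction h with
  | nil => rfl
  | cons x h ih =>
    simp only [marginalGains, List.toFinset_eq_of_perm _ _ h,
      ih (List.nodup_cons.mp hn).2]
  | swap x y l => exact hswap x y l hn
  | trans h₁ _ ih₁ ih₂ => exact (ih₁ hn).trans (ih₂ (h₁.nodup_iff.mp hn))

theorem cons_cons_eq_of_exchange {c a b a' b' : ℤ} (hc : 2 ≤ c)
    (ha : a ∈ ({-1, 0, c} : Set ℤ)) (hb : b ∈ ({-1, 0, c} : Set ℤ))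
    (ha' : a' ∈ ({-1, 0, c} : Set ℤ)) (hb' : b' ∈ ({-1, 0, c} : Set ℤ))
    (hsum : a + b' = b + a') (ha'a : a' ≤ a) (hb'b : b' ≤ b) (s : Multiset ℤ) :
    b' ::ₘ a ::ₘ s = a' ::ₘ b ::ₘ s := by
  simp only [Set.mem_insert_iff, Set.mem_singleton_iff] at ha hb ha' hb'
  have hcases : (a' = a ∧ b' = b) ∨ (b' = a' ∧ a = b) := by
    rcases ha with rfl | rfl | rfl <;> rcases hb with rfl | rfl | rfl <;>
      rcases ha' with rfl | rfl | rfl <;> rcases hb' with rfl | rfl | rfl <;> omega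
  rcases hcases with ⟨rfl, rfl⟩ | ⟨rfl, rfl⟩
  · exact Multiset.cons_swap _ _ _
  · rfl

theorem marginalGains_swap {O : Type*} [DecidableEq O] {c : ℤ} (hc : 2 ≤ c)
    {v : Finset O → ℤ}
    (hmarg : ∀ (o : O) (S : Finset O), o ∉ S →
      v (insert o S) - v S ∈ ({-1, 0, c} : Set ℤ))
    (hsub : ∀ (o : O) (S T : Finset O), S ⊆ T → o ∉ T →
      v (insert o T) - v T ≤ v (insert o S) - v S)
    {x y : O} {l : List O} (hn : (y :: x :: l).Nodup) :
    marginalGains v (y :: x :: l) = marginalGains v (x :: y :: l) := by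
  set T := l.toFinset
  have hxT : x ∉ T := by simp_all [T]
  have hyT : y ∉ T := by simp_all [T]
  have hxyT : x ∉ insert y T := by simp_all [T]; exact Ne.symm hn.1.1
  have hyxT : y ∉ insert x T := by simp_all [T]
  have hsum : (v (insert x T) - v T) + (v (insert y (insert x T)) - v (insert x T)) =
      (v (insert y T) - v T) + (v (insert x (insert y T)) - v (insert y T)) := by
    rw [Finset.insert_comm x y T]; ring
  simp only [marginalGains, List.toFinset_cons]
  exact cons_cons_eq_of_exchange hc (hmarg x T hxT) (hmarg y T hyT) (hmarg x _ hxyT)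
    (hmarg y _ hyxT) hsum (hsub x T _ (Finset.subset_insert _ _) hxyT)
    (hsub y T _ (Finset.subset_insert _ _) hyxT) _

theorem stmt0_general (c : ℤ) (hc : 2 ≤ c) (O : Type*) [DecidableEq O]
    (v : Finset O → ℤ)
    (hmarg : ∀ (o : O) (S : Finset O), o ∉ S →
      v (insert o S) - v S ∈ ({-1, 0, c} : Set ℤ))
    (hsub : ∀ (o : O) (S T : Finset O), S ⊆ T → o ∉ T →
      v (insert o T) - v T ≤ v (insert o S) - v S) :
    ∀ (l₁ l₂ : List O), l₁.Nodup → l₂.Nodup → l₁.toFinset = l₂.toFinset →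
      marginalGains v l₁ = marginalGains v l₂ := by
  intro l₁ l₂ hn₁ hn₂ heq
  exact marginalGains_eq_of_perm v (fun _ _ _ hn => marginalGains_swap hc hmarg hsub hn)
    (List.perm_of_nodup_nodup_toFinset_eq hn₁ hn₂ heq) hn₁

/-- For every integer `c ≥ 2`, every `{-1, 0, c}`-submodular valuation on a finite set of
items is order neutral: any two enumerations of the same set of items yield the same
multiset of marginal gains. -/
theorem stmt0 (c : ℤ) (hc : 2 ≤ c) (O : Type*) [Fintype O] [DecidableEq O]
    (v : Finset O → ℤ)
    (hempty : v ∅ = 0)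
    (hmarg : ∀ (o : O) (S : Finset O), o ∉ S →
      v (insert o S) - v S ∈ ({-1, 0, c} : Set ℤ))
    (hsub : ∀ (o : O) (S T : Finset O), S ⊆ T → o ∉ T →
      v (insert o T) - v T ≤ v (insert o S) - v S) :
    ∀ (l₁ l₂ : List O), l₁.Nodup → l₂.Nodup → l₁.toFinset = l₂.toFinset →
      marginalGains v l₁ = marginalGains v l₂ :=
  stmt0_general c hc O v hmarg hsub
end

section
/- There exist a finite set O of items and a {−1, 0, 1}-submodular valuation v on O that is not order neutral. Hence the statement '{−1, 0, c}-submodular valuations are order neutral' fails for c = 1. -/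
theorem marginalGains_pair {O : Type*} [DecidableEq O] (v : Finset O → ℤ) (a b : O) :
    marginalGains v [a, b] = {v {a, b} - v {b}, v {b} - v ∅} := by
  simp [marginalGains]

/- Item `0` adds `1` to `∅` and `0` to `{1}`; item `1` adds `0` to `∅` and `-1` to `{0}`.
So adding `0` first gives the gains `{1, -1}`, adding `1` first gives `{0, 0}`. -/
def zeroOnlyValuation (S : Finset (Fin 2)) : ℤ :=
  if S = {0} then 1 else 0

theorem zeroOnlyValuation_empty : zeroOnlyValuation ∅ = 0 := by
  decide

theorem zeroOnlyValuation_marginal_mem (o : Fin 2) (S : Finset (Fin 2)) :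
    zeroOnlyValuation (insert o S) - zeroOnlyValuation S ∈ ({-1, 0, 1} : Set ℤ) := by
  simp only [Set.mem_insert_iff, Set.mem_singleton_iff]
  revert o S
  decide

theorem zeroOnlyValuation_submodular (o : Fin 2) (S T : Finset (Fin 2)) (hST : S ⊆ T)
    (hoT : o ∉ T) :
    zeroOnlyValuation (insert o T) - zeroOnlyValuation T ≤
      zeroOnlyValuation (insert o S) - zeroOnlyValuation S := by
  revert o S T
  decide

theorem zeroOnlyValuation_marginalGains_ne :
    marginalGains zeroOnlyValuation [0, 1] ≠ marginalGains zeroOnlyValuation [1, 0] := by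
  rw [marginalGains_pair, marginalGains_pair]
  decide

/-- There exist a finite set of items and a `{-1, 0, 1}`-submodular valuation on it that
is *not* order neutral: some set of items has two enumerations yielding different
multisets of marginal gains. Hence order neutrality of `{-1, 0, c}`-submodular
valuations fails for `c = 1`. -/
theorem stmt3 :
    ∃ (n : ℕ) (v : Finset (Fin n) → ℤ),
      v ∅ = 0 ∧
      (∀ (o : Fin n) (S : Finset (Fin n)), o ∉ S →
        v (insert o S) - v S ∈ ({-1, 0, 1} : Set ℤ)) ∧
      (∀ (o : Fin n) (S T : Finset (Fin n)), S ⊆ T → o ∉ T →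
        v (insert o T) - v T ≤ v (insert o S) - v S) ∧
      ¬ (∀ (l₁ l₂ : List (Fin n)), l₁.Nodup → l₂.Nodup → l₁.toFinset = l₂.toFinset →
          marginalGains v l₁ = marginalGains v l₂) := by
  refine ⟨2, zeroOnlyValuation, zeroOnlyValuation_empty,
    fun o S _ => zeroOnlyValuation_marginal_mem o S, zeroOnlyValuation_submodular,
    fun h => zeroOnlyValuation_marginalGains_ne ?_⟩
  exact h [0, 1] [1, 0] (by decide) (by decide) (by decide)
end

section
/- Let k and t be natural numbers with t ≥ 1, and let u_1, …, u_k be positive integers such that u_i ≠ t for every i and u_1 + ⋯ + u_k ≤ k·t. Then (u_1 · u_2 ⋯ u_k)^2 ≤ (t^2 − 1)^k; that is, the product of the u_i is at most (t^2 − 1)^{k/2}. -/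
/-!
Put `r = (t - 1) / (t + 1)`. The sequence `n ↦ n² rⁿ` increases up to `n = t` and decreases
after it, and its values at `t - 1` and `t + 1` coincide, both being `(t² - 1) rᵗ`. Hence
`u² rᵘ ≤ (t² - 1) rᵗ` whenever `u ≠ t`. Multiplying over `i` gives
`(∏ uᵢ)² r^(∑ uᵢ) ≤ (t² - 1)ᵏ r^(k t)`, and `r^(k t) ≤ r^(∑ uᵢ)` because `r ≤ 1` and `∑ uᵢ ≤ k t`.
For `t ≤ 1` the bound is `0ᵏ`, and some `uᵢ` must vanish unless `k = 0`: otherwise every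
`uᵢ ≥ t + 1`.
-/

open Finset

namespace UtilityProduct

noncomputable def ratio (t : ℕ) : ℝ := ((t : ℝ) - 1) / (t + 1)

noncomputable def weight (t n : ℕ) : ℝ := (n : ℝ) ^ 2 * ratio t ^ n

variable {t : ℕ}

lemma ratio_mul_add_one (t : ℕ) : ratio t * (t + 1) = t - 1 := by
  unfold ratio; field_simp

lemma ratio_nonneg (ht : 1 ≤ t) : 0 ≤ ratio t := by
  unfold ratio
  have : (1 : ℝ) ≤ t := by exact_mod_cast ht
  apply div_nonneg <;> linarith

lemma ratio_pos (ht : 2 ≤ t) : 0 < ratio t := by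
  unfold ratio
  have : (2 : ℝ) ≤ t := by exact_mod_cast ht
  apply div_pos <;> linarith

lemma ratio_le_one (t : ℕ) : ratio t ≤ 1 := by
  unfold ratio
  rw [div_le_one (by positivity)]; linarith

lemma weight_add_one_mul (t n : ℕ) :
    weight t (n + 1) * (t + 1) = ((n : ℝ) + 1) ^ 2 * (t - 1) * ratio t ^ n := by
  rw [weight, pow_succ, ← ratio_mul_add_one t]; push_cast; ring

lemma weight_monotoneOn (ht : 1 ≤ t) : MonotoneOn (weight t) (Set.Iic t) := by
  refine monotoneOn_of_le_add_one Set.ordConnected_Iic fun n _ _ hn => ?_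
  have hn : (n : ℝ) + 1 ≤ t := by exact_mod_cast (hn : n + 1 ≤ t)
  have key : (n : ℝ) ^ 2 * (t + 1) ≤ ((n : ℝ) + 1) ^ 2 * (t - 1) := by nlinarith
  have := ratio_nonneg ht
  rw [← mul_le_mul_iff_of_pos_right (by positivity : (0 : ℝ) < t + 1), weight_add_one_mul, weight]
  calc (n : ℝ) ^ 2 * ratio t ^ n * (t + 1) = (n : ℝ) ^ 2 * (t + 1) * ratio t ^ n := by ring
    _ ≤ _ := by gcongr

lemma weight_antitoneOn (ht : 1 ≤ t) : AntitoneOn (weight t) (Set.Ici t) := by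
  refine antitoneOn_of_add_one_le Set.ordConnected_Ici fun n _ hn _ => ?_
  have hn : (t : ℝ) ≤ n := by exact_mod_cast (hn : t ≤ n)
  have key : ((n : ℝ) + 1) ^ 2 * (t - 1) ≤ (n : ℝ) ^ 2 * (t + 1) := by nlinarith
  have := ratio_nonneg ht
  rw [← mul_le_mul_iff_of_pos_right (by positivity : (0 : ℝ) < t + 1), weight_add_one_mul, weight]
  calc _ ≤ (n : ℝ) ^ 2 * (t + 1) * ratio t ^ n := by gcongr
    _ = _ := by ring

lemma weight_sub_one_self (ht : 1 ≤ t) :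
    weight t (t - 1) = ((t : ℝ) ^ 2 - 1) * ratio t ^ t := by
  obtain ⟨s, rfl⟩ : ∃ s, t = s + 1 := ⟨t - 1, by omega⟩
  rw [weight, Nat.add_sub_cancel, pow_succ]
  have := ratio_mul_add_one (s + 1)
  push_cast at *
  linear_combination -(s : ℝ) * ratio (s + 1) ^ s * this

lemma weight_add_one_self (t : ℕ) : weight t (t + 1) = ((t : ℝ) ^ 2 - 1) * ratio t ^ t := by
  rw [weight, pow_succ]
  have := ratio_mul_add_one t
  push_cast
  linear_combination ((t : ℝ) + 1) * ratio t ^ t * this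

lemma weight_le (ht : 1 ≤ t) {u : ℕ} (hu : u ≠ t) :
    weight t u ≤ ((t : ℝ) ^ 2 - 1) * ratio t ^ t := by
  rcases lt_or_gt_of_ne hu with hlt | hgt
  · rw [← weight_sub_one_self ht]
    exact weight_monotoneOn ht (Set.mem_Iic.2 hlt.le) (Set.mem_Iic.2 (by omega)) (by omega)
  · rw [← weight_add_one_self]
    exact weight_antitoneOn ht (Set.mem_Ici.2 (by omega)) (Set.mem_Ici.2 hgt.le) hgt

lemma weight_nonneg (ht : 1 ≤ t) (n : ℕ) : 0 ≤ weight t n :=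
  mul_nonneg (sq_nonneg _) (pow_nonneg (ratio_nonneg ht) n)

variable {ι : Type*} {s : Finset ι} {u : ι → ℕ}

lemma sq_prod_le_of_two_le (ht : 2 ≤ t) (hne : ∀ i ∈ s, u i ≠ t)
    (hsum : ∑ i ∈ s, u i ≤ #s * t) : (∏ i ∈ s, u i) ^ 2 ≤ (t ^ 2 - 1) ^ #s := by
  have ht1 : 1 ≤ t := by omega
  have hr := ratio_pos ht
  have hsq : (0 : ℝ) ≤ (t : ℝ) ^ 2 - 1 := sub_nonneg.2 (one_le_pow₀ (by exact_mod_cast ht1))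
  have hweights :
      (∏ i ∈ s, (u i : ℝ)) ^ 2 * ratio t ^ (∑ i ∈ s, u i) = ∏ i ∈ s, weight t (u i) := by
    simp only [weight, prod_mul_distrib, prod_pow, prod_pow_eq_pow_sum]
  have hbound : ∏ i ∈ s, weight t (u i) ≤ (((t : ℝ) ^ 2 - 1) * ratio t ^ t) ^ #s := by
    rw [← prod_const]
    exact prod_le_prod (fun i _ => weight_nonneg ht1 _) fun i hi => weight_le ht1 (hne i hi)
  have hpow : ratio t ^ (#s * t) ≤ ratio t ^ (∑ i ∈ s, u i) :=
    pow_le_pow_of_le_one hr.le (ratio_le_one t) hsum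
  have hreal : ((∏ i ∈ s, u i : ℕ) : ℝ) ^ 2 ≤ ((t : ℝ) ^ 2 - 1) ^ #s := by
    refine le_of_mul_le_mul_right ?_ (pow_pos hr (∑ i ∈ s, u i))
    calc ((∏ i ∈ s, u i : ℕ) : ℝ) ^ 2 * ratio t ^ (∑ i ∈ s, u i)
        ≤ ((t : ℝ) ^ 2 - 1) ^ #s * ratio t ^ (#s * t) := by
          push_cast; rw [hweights, mul_comm #s, pow_mul, ← mul_pow]; exact hbound
      _ ≤ ((t : ℝ) ^ 2 - 1) ^ #s * ratio t ^ (∑ i ∈ s, u i) :=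
          mul_le_mul_of_nonneg_left hpow (pow_nonneg hsq _)
  have hcast : ((t ^ 2 - 1 : ℕ) : ℝ) = (t : ℝ) ^ 2 - 1 := by
    rw [Nat.cast_sub (Nat.one_le_pow _ _ (by omega))]; push_cast; ring
  exact_mod_cast hcast ▸ hreal

lemma sq_prod_le_of_le_one (ht : t ≤ 1) (hne : ∀ i ∈ s, u i ≠ t)
    (hsum : ∑ i ∈ s, u i ≤ #s * t) : (∏ i ∈ s, u i) ^ 2 ≤ (t ^ 2 - 1) ^ #s := by
  rcases s.eq_empty_or_nonempty with rfl | hs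
  · simp
  by_cases h0 : ∏ i ∈ s, u i = 0
  · simp [h0]
  have hbig : ∀ i ∈ s, t + 1 ≤ u i := fun i hi => by
    have := prod_ne_zero_iff.1 h0 i hi
    have := hne i hi
    omega
  have := card_nsmul_le_sum s u (t + 1) hbig
  rw [smul_eq_mul] at this
  have := hs.card_pos
  nlinarith

end UtilityProduct

theorem stmt6_general (k t : ℕ) (u : Fin k → ℕ)
    (hne : ∀ i, u i ≠ t)
    (hsum : ∑ i, u i ≤ k * t) :
    (∏ i, u i) ^ 2 ≤ (t ^ 2 - 1) ^ k := by
  have hsum' : ∑ i, u i ≤ #(univ : Finset (Fin k)) * t := by simpa using hsum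
  rcases le_or_gt t 1 with ht | ht
  · simpa using UtilityProduct.sq_prod_le_of_le_one ht (fun i _ => hne i) hsum'
  · simpa using UtilityProduct.sq_prod_le_of_two_le ht (fun i _ => hne i) hsum'

/-- Let `k, t` be natural numbers with `t ≥ 1`, and let `u_1, …, u_k` be positive
natural numbers, each different from `t`, whose sum is at most `k * t`. Then the
square of their product is at most `(t² - 1)^k`. -/
theorem stmt6 (k t : ℕ) (ht : 1 ≤ t) (u : Fin k → ℕ)
    (hpos : ∀ i, 0 < u i) (hne : ∀ i, u i ≠ t)
    (hsum : ∑ i, u i ≤ k * t) :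
    (∏ i, u i) ^ 2 ≤ (t ^ 2 - 1) ^ k :=
  stmt6_general k t u hne hsum
end

section
/- Fix integers a, b, c with 0 ≤ a < b < c and c ≥ 2b, and let φ be a 2P2N-3SAT instance with n variables and m clauses. Then φ is satisfiable if and only if the allocation instance I(φ) admits an allocation whose egalitarian welfare is at least 2b. (Moreover, when φ is unsatisfiable, every allocation of I(φ) has egalitarian welfare at most b + a.) -/
open Finset

/-- Agents of the allocation instance `I(φ)` built from a 2P2N-3SAT instance with
`n` variables and `m` clauses: the positive-literal sink agent `pos i` and the
negative-literal sink agent `neg i` for each variable `i`, one clause agent for each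
clause, and `2n - m` dummy agents. -/
abbrev SatAgent (n m : ℕ) := (Fin n ⊕ Fin n) ⊕ (Fin m ⊕ Fin (2 * n - m))

/-- Items of the allocation instance `I(φ)`: literal items `(s, copy, i)` (two copies,
indexed by a `Bool`, of each positive literal `s = true` and negative literal
`s = false` of each variable `i`), a sink-clogger item for each variable, and one
special item for each clause agent and each dummy agent. -/
abbrev SatItem (n m : ℕ) := (Bool × Bool × Fin n) ⊕ (Fin n ⊕ (Fin m ⊕ Fin (2 * n - m)))

/-- The additive (per-item) valuations of the instance `I(φ)`, where a clause `C j` is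
given as the set of its literals `(sign, variable)`:
`pos i` values both copies of the positive literals of `i` at `b` and `clog i` at `c`;
`neg i` values both copies of the negative literals of `i` at `b` and `clog i` at `c`;
clause agent `j` values every copy of every literal occurring in `C j` at `b` and its
own special item at `b`; each dummy agent values every literal item at `b` and its own
special item at `b`. All other values are `a`. -/
def satVal (n m : ℕ) (a b c : ℤ) (C : Fin m → Finset (Bool × Fin n)) :
    SatAgent n m → SatItem n m → ℤ
  | Sum.inl (Sum.inl i), Sum.inl (s, _, j) => if s = true ∧ j = i then b else a
  | Sum.inl (Sum.inl i), Sum.inr (Sum.inl j) => if j = i then c else a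
  | Sum.inl (Sum.inl _), Sum.inr (Sum.inr _) => a
  | Sum.inl (Sum.inr i), Sum.inl (s, _, j) => if s = false ∧ j = i then b else a
  | Sum.inl (Sum.inr i), Sum.inr (Sum.inl j) => if j = i then c else a
  | Sum.inl (Sum.inr _), Sum.inr (Sum.inr _) => a
  | Sum.inr (Sum.inl k), Sum.inl (s, _, j) => if (s, j) ∈ C k then b else a
  | Sum.inr (Sum.inl _), Sum.inr (Sum.inl _) => a
  | Sum.inr (Sum.inl k), Sum.inr (Sum.inr (Sum.inl k')) => if k' = k then b else a
  | Sum.inr (Sum.inl _), Sum.inr (Sum.inr (Sum.inr _)) => a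
  | Sum.inr (Sum.inr _), Sum.inl _ => b
  | Sum.inr (Sum.inr _), Sum.inr (Sum.inl _) => a
  | Sum.inr (Sum.inr _), Sum.inr (Sum.inr (Sum.inl _)) => a
  | Sum.inr (Sum.inr d), Sum.inr (Sum.inr (Sum.inr d')) => if d' = d then b else a

/-- The utility of agent `i` under allocation `X` (which assigns every item to exactly
one agent): the sum of `i`'s values for the items allocated to `i`. -/
def satUtil (n m : ℕ) (a b c : ℤ) (C : Fin m → Finset (Bool × Fin n))
    (X : SatItem n m → SatAgent n m) (i : SatAgent n m) : ℤ :=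
  ∑ o : SatItem n m, if X o = i then satVal n m a b c C i o else 0

/-!
From a satisfying assignment, give each clog to the sink of the true literal (worth `c ≥ 2b`)
and both copies of each false literal to its sink. Every literal lies in only two clauses, so the
`2n` copies of true literals can be handed out one each to the `m` clause agents, each getting a
copy of a true literal it contains, and to the `2n - m` dummies; clause and dummy agents
also keep their special items. Everybody then gets `2b`.

Conversely, let every agent get more than `b + a`. An agent not holding its own clog values
every item at most `b`, so it holds at least two items, and if exactly two, both worth more than
`a` to it. With `7n` items, `4n` agents and `n` clogs this forces every clog onto one of its own
sinks and exactly two items onto every other agent. The sink of `x_i` left without `clog_i`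
therefore holds both copies of its literal, and the non-special item of a clause agent is a copy
of a literal made true by "`x_i` holds iff `pos_i` has `clog_i`".
-/

lemma exists_injective_prod_snd_eq {α β γ : Type*} [Fintype α] [DecidableEq β] [Fintype γ]
    (f : α → β) (hf : ∀ y, #{x | f x = y} ≤ Fintype.card γ) :
    ∃ g : α → γ × β, Function.Injective g ∧ ∀ x, (g x).2 = f x := by
  have e : ∀ y, {x // f x = y} ↪ γ := fun y =>
    (Function.Embedding.nonempty_of_card_le (by rw [Fintype.card_subtype]; exact hf y)).some
  refine ⟨fun x => (e (f x) ⟨x, rfl⟩, f x), ?_, fun _ => rfl⟩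
  exact (Equiv.prodComm _ _).injective.comp <| (Equiv.sigmaEquivProd _ _).injective.comp <|
    (Function.Embedding.sigmaMap (Function.Embedding.refl β) e).injective.comp
      (Equiv.sigmaFiberEquiv f).symm.injective

lemma exists_sumEquiv_inl_eq {α β δ : Type*} [Fintype α] [Fintype β] [Fintype δ]
    (h : α → β) (hinj : Function.Injective h)
    (hcard : Fintype.card α + Fintype.card δ = Fintype.card β) :
    ∃ E : α ⊕ δ ≃ β, ∀ x, E (.inl x) = h x := by
  classical
  have hδ : Fintype.card δ = Fintype.card ((Set.range h)ᶜ : Set β) := by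
    rw [Fintype.card_compl_set, Set.card_range_of_injective hinj]
    omega
  exact ⟨((Equiv.ofInjective h hinj).sumCongr (Fintype.equivOfCardEq hδ)).trans
    (Equiv.Set.sumCompl _), fun _ => rfl⟩

lemma card_fiber_eq_two_of_card_add_eq {ι κ : Type*} [Fintype ι] [Fintype κ] [DecidableEq κ]
    (X : ι → κ) (S : Finset κ) (k : ℕ) (hS : #S ≤ k)
    (hin : ∀ i ∈ S, 1 ≤ #{o | X o = i}) (hout : ∀ i ∉ S, 2 ≤ #{o | X o = i})
    (hcard : Fintype.card ι + k = 2 * Fintype.card κ) :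
    #S = k ∧ ∀ i ∉ S, #{o | X o = i} = 2 := by
  set lb : κ → ℕ := fun i => if i ∈ S then 1 else 2
  have hlb : ∀ i ∈ univ, lb i ≤ #{o | X o = i} := by
    intro i _
    by_cases hi : i ∈ S <;> simp [lb, hi, hin, hout]
  have hsum_lb : ∑ i, lb i + #S = 2 * Fintype.card κ := by
    have := S.card_le_univ
    simp [lb, Finset.sum_ite, Finset.filter_not, Finset.card_univ_sdiff]
    omega
  have hsum : ∑ i, #{o | X o = i} = Fintype.card ι :=
    (card_eq_sum_card_fiberwise (fun o _ => mem_univ (X o))).symm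
  have hle : ∑ i, lb i ≤ ∑ i, #{o | X o = i} := Finset.sum_le_sum hlb
  have hSk : #S = k := by omega
  refine ⟨hSk, fun i hi => ?_⟩
  have := (Finset.sum_eq_sum_iff_of_le hlb).mp (by omega) i (mem_univ i)
  simpa [lb, hi] using this.symm

lemma two_le_card_of_add_lt_sum {ι : Type*} {s : Finset ι} {f : ι → ℤ} {a b : ℤ}
    (ha : 0 ≤ a) (hb : 0 ≤ b) (hle : ∀ x ∈ s, f x ≤ b) (hsum : b + a < ∑ x ∈ s, f x) :
    2 ≤ #s := by
  by_contra! hs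
  have : ∑ x ∈ s, f x ≤ #s • b := sum_le_card_nsmul s f b hle
  rw [nsmul_eq_mul] at this
  have : (#s : ℤ) * b ≤ b := mul_le_of_le_one_left hb (by exact_mod_cast Nat.lt_succ_iff.mp hs)
  linarith

lemma lt_of_card_eq_two_of_add_lt_sum {ι : Type*} [DecidableEq ι] {s : Finset ι} {f : ι → ℤ}
    {a b : ℤ} (hs : #s = 2) (hle : ∀ x ∈ s, f x ≤ b) (hsum : b + a < ∑ x ∈ s, f x) :
    ∀ x ∈ s, a < f x := by
  obtain ⟨x, y, hxy, rfl⟩ := card_eq_two.mp hs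
  rw [sum_pair hxy] at hsum
  have hx := hle x (by simp)
  have hy := hle y (by simp)
  intro z hz
  simp only [mem_insert, mem_singleton] at hz
  rcases hz with rfl | rfl <;> linarith

section
variable {n m : ℕ} {a b c : ℤ} {C : Fin m → Finset (Bool × Fin n)}

lemma card_filter_mem_eq_two
    (hpos : ∀ i : Fin n, (univ.filter (fun j => (true, i) ∈ C j)).card = 2)
    (hneg : ∀ i : Fin n, (univ.filter (fun j => (false, i) ∈ C j)).card = 2)
    (l : Bool × Fin n) : #{j | l ∈ C j} = 2 := by
  rcases l with ⟨_ | _, i⟩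
  exacts [hneg i, hpos i]

lemma three_mul_eq_four_mul (hcard : ∀ j, (C j).card = 3)
    (hlit : ∀ l : Bool × Fin n, #{j | l ∈ C j} = 2) : 3 * m = 4 * n := by
  have := sum_card_bipartiteAbove_eq_sum_card_bipartiteBelow (s := univ) (t := univ)
    (r := fun j l => l ∈ C j)
  simp [bipartiteAbove, bipartiteBelow, hcard, hlit] at this
  omega

lemma card_satItem (hm : m ≤ 2 * n) : Fintype.card (SatItem n m) = 7 * n := by
  simp [Fintype.card_sum, Fintype.card_prod]
  omega

lemma card_satAgent (hm : m ≤ 2 * n) : Fintype.card (SatAgent n m) = 4 * n := by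
  simp [Fintype.card_sum]
  omega

variable (m) in
def sinkAgent : Bool → Fin n → SatAgent n m
  | true, i => .inl (.inl i)
  | false, i => .inl (.inr i)

lemma sinkAgent_injective : Function.Injective2 (sinkAgent (n := n) m) := by
  rintro (_ | _) (_ | _) i i' h <;> simp_all [sinkAgent]

lemma sinkAgent_ne_inr (s : Bool) (i : Fin n) (u : Fin m ⊕ Fin (2 * n - m)) :
    sinkAgent m s i ≠ .inr u := by
  cases s <;> simp [sinkAgent]

lemma satAgent_cases (i : SatAgent n m) :
    (∃ s i0, i = sinkAgent m s i0) ∨ ∃ u, i = .inr u := by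
  rcases i with (i0 | i0) | u
  exacts [.inl ⟨true, i0, rfl⟩, .inl ⟨false, i0, rfl⟩, .inr ⟨u, rfl⟩]

lemma satVal_sinkAgent_lit (s s' cpy : Bool) (i j : Fin n) :
    satVal n m a b c C (sinkAgent m s i) (.inl (s', cpy, j)) =
      if s' = s ∧ j = i then b else a := by
  cases s <;> rfl

lemma satVal_sinkAgent_clog (s : Bool) (i j : Fin n) :
    satVal n m a b c C (sinkAgent m s i) (.inr (.inl j)) = if j = i then c else a := by
  cases s <;> rfl

lemma satVal_sinkAgent_special (s : Bool) (i : Fin n) (u : Fin m ⊕ Fin (2 * n - m)) :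
    satVal n m a b c C (sinkAgent m s i) (.inr (.inr u)) = a := by
  cases s <;> rfl

lemma satVal_inr_special (u : Fin m ⊕ Fin (2 * n - m)) :
    satVal n m a b c C (.inr u) (.inr (.inr u)) = b := by
  rcases u with j | d <;> simp [satVal]

lemma satVal_nonneg (ha : 0 ≤ a) (hab : a ≤ b) (hac : a ≤ c) (i : SatAgent n m)
    (o : SatItem n m) : 0 ≤ satVal n m a b c C i o := by
  rcases i with (_ | _) | (_ | _) <;> rcases o with _ | (_ | (_ | _)) <;>
    simp only [satVal] <;> (try split_ifs) <;> omega

lemma satVal_inr_le (hab : a ≤ b) (u : Fin m ⊕ Fin (2 * n - m)) (o : SatItem n m) :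
    satVal n m a b c C (.inr u) o ≤ b := by
  rcases u with _ | _ <;> rcases o with _ | (_ | (_ | _)) <;>
    simp only [satVal] <;> (try split_ifs) <;> omega

lemma satVal_sinkAgent_le (hab : a ≤ b) {s : Bool} {i : Fin n} {o : SatItem n m}
    (ho : o ≠ .inr (.inl i)) : satVal n m a b c C (sinkAgent m s i) o ≤ b := by
  rcases o with ⟨s', cpy, j⟩ | (j | u)
  · rw [satVal_sinkAgent_lit]; split_ifs <;> omega
  · rw [satVal_sinkAgent_clog, if_neg (by rintro rfl; exact ho rfl)]; exact hab
  · rw [satVal_sinkAgent_special]; exact hab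

lemma eq_of_lt_satVal_sinkAgent {s : Bool} {i : Fin n} {o : SatItem n m}
    (h : a < satVal n m a b c C (sinkAgent m s i) o) :
    o = .inr (.inl i) ∨ ∃ cpy, o = .inl (s, cpy, i) := by
  rcases o with ⟨s', cpy, j⟩ | (j | u)
  · rw [satVal_sinkAgent_lit] at h
    split_ifs at h with hs
    · obtain ⟨rfl, rfl⟩ := hs; exact .inr ⟨cpy, rfl⟩
    · exact absurd h (lt_irrefl a)
  · rw [satVal_sinkAgent_clog] at h
    split_ifs at h with hj
    · exact .inl (hj ▸ rfl)
    · exact absurd h (lt_irrefl a)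
  · rw [satVal_sinkAgent_special] at h; exact absurd h (lt_irrefl a)

lemma eq_of_lt_satVal_clause {j : Fin m} {o : SatItem n m}
    (h : a < satVal n m a b c C (.inr (.inl j)) o) :
    o = .inr (.inr (.inl j)) ∨ ∃ s cpy i, o = .inl (s, cpy, i) ∧ (s, i) ∈ C j := by
  rcases o with ⟨s, cpy, i⟩ | (_ | (k | _)) <;> simp only [satVal] at h <;>
    (try split_ifs at h with hk) <;> (try exact absurd h (lt_irrefl a))
  · exact .inr ⟨s, cpy, i, rfl, hk⟩
  · exact .inl (hk ▸ rfl)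

lemma satUtil_eq_sum_filter (X : SatItem n m → SatAgent n m) (i : SatAgent n m) :
    satUtil n m a b c C X i = ∑ o with X o = i, satVal n m a b c C i o := by
  rw [satUtil, sum_filter]

lemma sum_satVal_le_satUtil (ha : 0 ≤ a) (hab : a ≤ b) (hac : a ≤ c)
    {X : SatItem n m → SatAgent n m} {i : SatAgent n m} {T : Finset (SatItem n m)}
    (hT : ∀ o ∈ T, X o = i) :
    ∑ o ∈ T, satVal n m a b c C i o ≤ satUtil n m a b c C X i := by
  rw [satUtil_eq_sum_filter]
  exact sum_le_sum_of_subset_of_nonneg (fun o ho => by simpa using hT o ho)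
    (fun o _ _ => satVal_nonneg ha hab hac i o)

variable (m) in
def satAlloc (σ : Fin n → Bool) (E : Fin m ⊕ Fin (2 * n - m) ≃ Bool × Fin n) :
    SatItem n m → SatAgent n m
  | .inl (s, cpy, i) => if σ i = s then .inr (E.symm (cpy, i)) else sinkAgent m s i
  | .inr (.inl i) => sinkAgent m (σ i) i
  | .inr (.inr u) => .inr u

lemma le_satUtil_satAlloc (ha : 0 ≤ a) (hab : a ≤ b) (hc : 2 * b ≤ c)
    (σ : Fin n → Bool) (E : Fin m ⊕ Fin (2 * n - m) ≃ Bool × Fin n)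
    (hE : ∀ j, (σ (E (.inl j)).2, (E (.inl j)).2) ∈ C j) (i : SatAgent n m) :
    2 * b ≤ satUtil n m a b c C (satAlloc m σ E) i := by
  have hac : a ≤ c := by omega
  rcases satAgent_cases i with ⟨s, i, rfl⟩ | ⟨u, rfl⟩
  · by_cases hs : σ i = s
    · have := sum_satVal_le_satUtil (C := C) ha hab hac (X := satAlloc m σ E)
        (i := sinkAgent m s i) (T := {.inr (.inl i)}) (by simp [satAlloc, hs])
      rw [sum_singleton, satVal_sinkAgent_clog, if_pos rfl] at this
      omega
    · have := sum_satVal_le_satUtil (C := C) ha hab hac (X := satAlloc m σ E)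
        (i := sinkAgent m s i) (T := {.inl (s, false, i), .inl (s, true, i)})
        (by simp [satAlloc, hs])
      rw [sum_pair (by simp), satVal_sinkAgent_lit, satVal_sinkAgent_lit,
        if_pos ⟨rfl, rfl⟩] at this
      omega
  · set l := E u
    have := sum_satVal_le_satUtil (C := C) ha hab hac (X := satAlloc m σ E) (i := .inr u)
      (T := {.inr (.inr u), .inl (σ l.2, l.1, l.2)}) (by simp [satAlloc, l])
    rw [sum_pair (by simp), satVal_inr_special] at this
    have hlit : satVal n m a b c C (.inr u) (.inl (σ l.2, l.1, l.2)) = b := by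
      rcases u with j | d
      · exact if_pos (hE j)
      · rfl
    omega

lemma exists_equiv_inl_mem_of_satisfiable (hm : m ≤ 2 * n)
    (hlit : ∀ l : Bool × Fin n, #{j | l ∈ C j} = 2)
    (σ : Fin n → Bool) (hσ : ∀ j : Fin m, ∃ l ∈ C j, σ l.2 = l.1) :
    ∃ E : Fin m ⊕ Fin (2 * n - m) ≃ Bool × Fin n,
      ∀ j, (σ (E (.inl j)).2, (E (.inl j)).2) ∈ C j := by
  choose l hlC hlσ using hσ
  have hl : ∀ j, (σ (l j).2, (l j).2) = l j := fun j => Prod.ext (hlσ j) rfl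
  obtain ⟨g, hg, hgl⟩ := exists_injective_prod_snd_eq (γ := Bool) (fun j => (l j).2) fun i =>
    calc #{j | (l j).2 = i}
        ≤ #{j | (σ i, i) ∈ C j} := card_le_card fun j hj => by
          simp only [mem_filter, mem_univ, true_and] at hj ⊢
          exact hj ▸ (hl j).symm ▸ hlC j
      _ = Fintype.card Bool := by rw [hlit, Fintype.card_bool]
  obtain ⟨E, hE⟩ := exists_sumEquiv_inl_eq (δ := Fin (2 * n - m)) g hg (by simp; omega)
  refine ⟨E, fun j => ?_⟩
  rw [hE, hgl, hl]
  exact hlC j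

def HoldsOwnClog (X : SatItem n m → SatAgent n m) (i : SatAgent n m) : Prop :=
  ∃ s i0, i = sinkAgent m s i0 ∧ X (.inr (.inl i0)) = i

lemma satVal_le_of_not_holdsOwnClog (hab : a ≤ b) {X : SatItem n m → SatAgent n m}
    {i : SatAgent n m} (hi : ¬HoldsOwnClog X i) {o : SatItem n m} (ho : X o = i) :
    satVal n m a b c C i o ≤ b := by
  rcases satAgent_cases i with ⟨s, i0, rfl⟩ | ⟨u, rfl⟩
  · exact satVal_sinkAgent_le hab fun h => hi ⟨s, i0, rfl, h ▸ ho⟩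
  · exact satVal_inr_le hab u o

section Welfare
variable {X : SatItem n m → SatAgent n m}

lemma apply_clog_eq_sinkAgent_and_card_eq_two (ha : 0 ≤ a) (hab : a < b) (hm : m ≤ 2 * n)
    (hX : ∀ i, b + a < satUtil n m a b c C X i) :
    (∀ i0, ∃ s, X (.inr (.inl i0)) = sinkAgent m s i0) ∧
      ∀ i, ¬HoldsOwnClog X i → #{o | X o = i} = 2 := by
  classical
  set S : Finset (SatAgent n m) := {i | HoldsOwnClog X i}
  set T : Finset (SatAgent n m) := univ.image fun i0 => X (.inr (.inl i0))
  have hST : S ⊆ T := by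
    rintro _ hi
    obtain ⟨s, i0, -, hXi⟩ := (mem_filter.mp hi).2
    exact mem_image.mpr ⟨i0, mem_univ _, hXi⟩
  have hT : #T ≤ n := card_image_le.trans_eq (card_fin n)
  obtain ⟨hSn, htwo⟩ := card_fiber_eq_two_of_card_add_eq X S n ((card_le_card hST).trans hT)
    (fun i hi => by
      obtain ⟨s, i0, -, hXi⟩ := (mem_filter.mp hi).2
      exact card_pos.mpr ⟨_, mem_filter.mpr ⟨mem_univ _, hXi⟩⟩)
    (fun i hi => two_le_card_of_add_lt_sum ha (by omega)
      (fun o ho => satVal_le_of_not_holdsOwnClog hab.le (by simpa [S] using hi)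
        (mem_filter.mp ho).2)
      (satUtil_eq_sum_filter X i ▸ hX i))
    (by rw [card_satItem hm, card_satAgent hm]; ring)
  refine ⟨fun i0 => ?_, fun i hi => htwo i (by simpa [S] using hi)⟩
  have hTS : T = S := (eq_of_subset_of_card_le hST (by omega)).symm
  have hinj : Set.InjOn (fun i0 => X (.inr (.inl i0))) (univ : Finset (Fin n)) :=
    card_image_iff.mp ((hTS ▸ hSn).trans (card_fin n).symm)
  have hmem : X (.inr (.inl i0)) ∈ S := hTS ▸ mem_image_of_mem _ (mem_univ i0)
  obtain ⟨s, i1, hi1, hX1⟩ := (mem_filter.mp hmem).2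
  obtain rfl : i1 = i0 := hinj (mem_univ _) (mem_univ _) hX1
  exact ⟨s, hi1⟩

lemma lt_satVal_of_not_holdsOwnClog (ha : 0 ≤ a) (hab : a < b) (hm : m ≤ 2 * n)
    (hX : ∀ i, b + a < satUtil n m a b c C X i) {i : SatAgent n m} (hi : ¬HoldsOwnClog X i)
    {o : SatItem n m} (ho : X o = i) : a < satVal n m a b c C i o :=
  lt_of_card_eq_two_of_add_lt_sum ((apply_clog_eq_sinkAgent_and_card_eq_two ha hab hm hX).2 i hi)
    (fun _ ho' => satVal_le_of_not_holdsOwnClog hab.le hi (mem_filter.mp ho').2)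
    (satUtil_eq_sum_filter X i ▸ hX i) o (by simpa using ho)

lemma apply_lit_eq_sinkAgent_not (ha : 0 ≤ a) (hab : a < b) (hm : m ≤ 2 * n)
    (hX : ∀ i, b + a < satUtil n m a b c C X i) {s : Bool} {i : Fin n}
    (hs : X (.inr (.inl i)) = sinkAgent m s i) (cpy : Bool) :
    X (.inl (!s, cpy, i)) = sinkAgent m (!s) i := by
  have hne : sinkAgent m s i ≠ sinkAgent m (!s) i := by cases s <;> simp [sinkAgent]
  have hnot : ¬HoldsOwnClog X (sinkAgent m (!s) i) := by
    rintro ⟨s', i', h, hX'⟩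
    obtain ⟨-, rfl⟩ := sinkAgent_injective h
    exact hne (hs.symm.trans hX')
  have hsub : ({o | X o = sinkAgent m (!s) i} : Finset (SatItem n m)) ⊆
      {.inl (!s, false, i), .inl (!s, true, i)} := by
    intro o ho
    have hXo := (mem_filter.mp ho).2
    rcases eq_of_lt_satVal_sinkAgent (lt_satVal_of_not_holdsOwnClog ha hab hm hX hnot hXo)
      with rfl | ⟨_ | _, rfl⟩
    · exact absurd (hs.symm.trans hXo) hne
    all_goals simp
  have hbundle := eq_of_subset_of_card_le hsub <|
    (card_le_two).trans_eq ((apply_clog_eq_sinkAgent_and_card_eq_two ha hab hm hX).2 _ hnot).symm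
  have hmem : .inl (!s, cpy, i) ∈ ({o | X o = sinkAgent m (!s) i} : Finset (SatItem n m)) := by
    rw [hbundle]; cases cpy <;> simp
  exact (mem_filter.mp hmem).2

lemma satisfiable_of_add_lt_satUtil (ha : 0 ≤ a) (hab : a < b) (hm : m ≤ 2 * n)
    (hX : ∀ i, b + a < satUtil n m a b c C X i) :
    ∃ σ : Fin n → Bool, ∀ j : Fin m, ∃ l ∈ C j, σ l.2 = l.1 := by
  choose σ hσ using (apply_clog_eq_sinkAgent_and_card_eq_two ha hab hm hX).1
  refine ⟨σ, fun j => ?_⟩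
  have hnot : ¬HoldsOwnClog X (.inr (.inl j)) := fun ⟨s, i, h, _⟩ =>
    sinkAgent_ne_inr s i _ h.symm
  obtain ⟨o, hXo, hspecial⟩ : ∃ o, X o = .inr (.inl j) ∧ o ≠ .inr (.inr (.inl j)) := by
    obtain ⟨o₁, o₂, hne, hbundle⟩ :=
      card_eq_two.mp ((apply_clog_eq_sinkAgent_and_card_eq_two ha hab hm hX).2 _ hnot)
    have hmem : ∀ o ∈ ({o₁, o₂} : Finset _), X o = .inr (.inl j) := fun o ho => by
      rw [← hbundle] at ho
      simpa using ho
    by_cases h₁ : o₁ = .inr (.inr (.inl j))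
    · exact ⟨o₂, hmem o₂ (by simp), fun h₂ => hne (h₁.trans h₂.symm)⟩
    · exact ⟨o₁, hmem o₁ (by simp), h₁⟩
  rcases eq_of_lt_satVal_clause (lt_satVal_of_not_holdsOwnClog ha hab hm hX hnot hXo)
    with h | ⟨s, cpy, i, rfl, hsi⟩
  · exact absurd h hspecial
  refine ⟨(s, i), hsi, ?_⟩
  by_contra hσs
  obtain rfl : s = !σ i := by cases s <;> simp_all
  rw [apply_lit_eq_sinkAgent_not ha hab hm hX (hσ i) cpy] at hXo
  exact sinkAgent_ne_inr _ _ _ hXo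

end Welfare

end

theorem stmt7_general (a b c : ℤ) (ha : 0 ≤ a) (hab : a < b) (hc2b : 2 * b ≤ c)
    (n m : ℕ) (C : Fin m → Finset (Bool × Fin n))
    (hcard : ∀ j, (C j).card = 3)
    (hpos : ∀ i : Fin n, (univ.filter (fun j => (true, i) ∈ C j)).card = 2)
    (hneg : ∀ i : Fin n, (univ.filter (fun j => (false, i) ∈ C j)).card = 2) :
    ((∃ σ : Fin n → Bool, ∀ j : Fin m, ∃ l ∈ C j, σ l.2 = l.1) ↔
      ∃ X : SatItem n m → SatAgent n m,
        ∀ i : SatAgent n m, 2 * b ≤ satUtil n m a b c C X i) ∧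
    ((¬ ∃ σ : Fin n → Bool, ∀ j : Fin m, ∃ l ∈ C j, σ l.2 = l.1) →
      ∀ X : SatItem n m → SatAgent n m,
        ∃ i : SatAgent n m, satUtil n m a b c C X i ≤ b + a) := by
  have hlit := card_filter_mem_eq_two hpos hneg
  have hm : m ≤ 2 * n := by have := three_mul_eq_four_mul hcard hlit; omega
  refine ⟨⟨fun ⟨σ, hσ⟩ => ?_, fun ⟨X, hX⟩ => ?_⟩, fun hunsat X => ?_⟩
  · obtain ⟨E, hE⟩ := exists_equiv_inl_mem_of_satisfiable hm hlit σ hσ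
    exact ⟨satAlloc m σ E, le_satUtil_satAlloc ha hab.le hc2b σ E hE⟩
  · exact satisfiable_of_add_lt_satUtil ha hab hm fun i => by linarith [hX i]
  · by_contra! hX
    exact hunsat (satisfiable_of_add_lt_satUtil ha hab hm hX)

/-- Fix integers `0 ≤ a < b < c` with `c ≥ 2b`, and a 2P2N-3SAT instance `φ` with `n`
variables and clauses `C 0, …, C (m-1)`, each a set of exactly three literals, in which
every variable occurs in exactly two clauses positively and in exactly two clauses
negatively. Then `φ` is satisfiable iff the allocation instance `I(φ)` admits an
allocation of egalitarian welfare at least `2b`; moreover, if `φ` is unsatisfiable,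
every allocation of `I(φ)` has egalitarian welfare at most `b + a`. -/
theorem stmt7 (a b c : ℤ) (ha : 0 ≤ a) (hab : a < b) (hbc : b < c) (hc2b : 2 * b ≤ c)
    (n m : ℕ) (C : Fin m → Finset (Bool × Fin n))
    (hcard : ∀ j, (C j).card = 3)
    (hpos : ∀ i : Fin n, (univ.filter (fun j => (true, i) ∈ C j)).card = 2)
    (hneg : ∀ i : Fin n, (univ.filter (fun j => (false, i) ∈ C j)).card = 2) :
    ((∃ σ : Fin n → Bool, ∀ j : Fin m, ∃ l ∈ C j, σ l.2 = l.1) ↔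
      ∃ X : SatItem n m → SatAgent n m,
        ∀ i : SatAgent n m, 2 * b ≤ satUtil n m a b c C X i) ∧
    ((¬ ∃ σ : Fin n → Bool, ∀ j : Fin m, ∃ l ∈ C j, σ l.2 = l.1) →
      ∀ X : SatItem n m → SatAgent n m,
        ∃ i : SatAgent n m, satUtil n m a b c C X i ≤ b + a) :=
  stmt7_general a b c ha hab hc2b n m C hcard hpos hneg
end
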